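/- arXiv:2301.02100 — 3 statements merged into one kernel-verified Lean document; each statement's English description precedes it below -/
import Mathlib

section
/- For every nonnegative allowable d×d matrix g and x, y ∈ S⁺: if d(x,y) ≤ 1/2 then |σ(g,x) − σ(g,y)| ≤ 4 d(x,y), and in general |σ(g,x) − σ(g,y)| ≤ 2(2 + log L(g)) d(x,y). -/
/-- ℓ¹ norm on `ℝ^d`. -/
def l1 {d : ℕ} (x : Fin d → ℝ) : ℝ := ∑ i, |x i|

/-- The set of nonnegative vectors of ℓ¹-norm one. -/
def Splus (d : ℕ) : Set (Fin d → ℝ) := {x | (∀ i, 0 ≤ x i) ∧ ∑ i, x i = 1}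

/-- ℓ¹ operator norm `‖g‖ = sup_{‖x‖₁ = 1} ‖gx‖₁`. -/
noncomputable def opN {d : ℕ} (g : Matrix (Fin d) (Fin d) ℝ) : ℝ :=
  sSup {c : ℝ | ∃ x : Fin d → ℝ, l1 x = 1 ∧ c = l1 (g.mulVec x)}

/-- `v(g) = inf_{x ∈ S⁺} ‖gx‖₁`. -/
noncomputable def vN {d : ℕ} (g : Matrix (Fin d) (Fin d) ℝ) : ℝ :=
  sInf {c : ℝ | ∃ x ∈ Splus d, c = l1 (g.mulVec x)}

/-- A nonnegative matrix is allowable if every row and column has a positive entry. -/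
def Allowable {d : ℕ} (g : Matrix (Fin d) (Fin d) ℝ) : Prop :=
  (∀ i j, 0 ≤ g i j) ∧ (∀ i, ∃ j, 0 < g i j) ∧ (∀ j, ∃ i, 0 < g i j)

noncomputable def mfun {d : ℕ} (u v : Fin d → ℝ) : ℝ :=
  sInf {c : ℝ | ∃ i : Fin d, 0 < v i ∧ c = u i / v i}

/-- The projective distance `d(x,y) = φ(m(x,y)m(y,x))` with `φ(s) = (1-s)/(1+s)`. -/
noncomputable def dmet {d : ℕ} (x y : Fin d → ℝ) : ℝ :=
  (1 - mfun x y * mfun y x) / (1 + mfun x y * mfun y x)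

/-!
Write `s = m(x,y) m(y,x)`, so that `d(x,y) = (1 - s)/(1 + s)`. Coordinatewise `m(x,y) y ≤ x`, and
`x ↦ ‖gx‖₁ = ∑ⱼ (∑ᵢ gᵢⱼ) xⱼ` is linear and monotone on nonnegative vectors, so `s‖gx‖ ≤ ‖gy‖` and
`s‖gy‖ ≤ ‖gx‖`. Hence `|σ(g,x) − σ(g,y)| ≤ −log s ≤ 1/s − 1`, which is at most `4 d(x,y)` as soon as
`s ≥ 1/3`, i.e. `d(x,y) ≤ 1/2`. When `d(x,y) > 1/2`, the crude bound `log L(g)`, which holds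
because `v(g) ≤ ‖gx‖, ‖gy‖ ≤ ‖g‖`, is at most `2 log L(g) d(x,y)`.
-/

open Real Finset Matrix

variable {d : ℕ}

lemma Allowable.sum_pos {g : Matrix (Fin d) (Fin d) ℝ} (hg : Allowable g) (j : Fin d) :
    0 < ∑ i, g i j :=
  let ⟨i, hi⟩ := hg.2.2 j
  sum_pos' (fun i _ => hg.1 i j) ⟨i, mem_univ i, hi⟩

lemma l1_nonneg (x : Fin d → ℝ) : 0 ≤ l1 x :=
  sum_nonneg fun i _ => abs_nonneg (x i)

lemma l1_eq_one_of_mem_Splus {x : Fin d → ℝ} (hx : x ∈ Splus d) : l1 x = 1 := by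
  rw [l1, ← hx.2]
  exact sum_congr rfl fun i _ => abs_of_nonneg (hx.1 i)

lemma l1_mulVec_le (g : Matrix (Fin d) (Fin d) ℝ) (z : Fin d → ℝ) :
    l1 (g *ᵥ z) ≤ (∑ i, ∑ j, |g i j|) * l1 z := by
  rw [l1, sum_mul]
  refine sum_le_sum fun i _ => ?_
  calc |(g *ᵥ z) i| = |∑ j, g i j * z j| := rfl
    _ ≤ ∑ j, |g i j| * |z j| := (abs_sum_le_sum_abs _ _).trans_eq (by simp only [abs_mul])
    _ ≤ ∑ j, |g i j| * l1 z := by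
        gcongr with j
        exact single_le_sum (fun k _ => abs_nonneg (z k)) (mem_univ j)
    _ = (∑ j, |g i j|) * l1 z := (sum_mul ..).symm

lemma l1_mulVec_le_opN (g : Matrix (Fin d) (Fin d) ℝ) {x : Fin d → ℝ} (hx : l1 x = 1) :
    l1 (g *ᵥ x) ≤ opN g := by
  refine le_csSup ⟨∑ i, ∑ j, |g i j|, ?_⟩ ⟨x, hx, rfl⟩
  rintro _ ⟨z, hz, rfl⟩
  simpa only [hz, mul_one] using l1_mulVec_le g z

lemma vN_le_l1_mulVec (g : Matrix (Fin d) (Fin d) ℝ) {x : Fin d → ℝ} (hx : x ∈ Splus d) :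
    vN g ≤ l1 (g *ᵥ x) := by
  refine csInf_le ⟨0, ?_⟩ ⟨x, hx, rfl⟩
  rintro _ ⟨z, -, rfl⟩
  exact l1_nonneg _

lemma l1_mulVec_of_nonneg {g : Matrix (Fin d) (Fin d) ℝ} (hg : ∀ i j, 0 ≤ g i j)
    {x : Fin d → ℝ} (hx : ∀ i, 0 ≤ x i) :
    l1 (g *ᵥ x) = ∑ j, (∑ i, g i j) * x j := by
  simp_rw [sum_mul]
  rw [sum_comm]
  refine sum_congr rfl fun i _ => abs_of_nonneg ?_
  exact (sum_nonneg fun j _ => mul_nonneg (hg i j) (hx j) : 0 ≤ ∑ j, g i j * x j)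

lemma vN_pos {g : Matrix (Fin d) (Fin d) ℝ} (hg : ∀ i j, 0 ≤ g i j)
    (hcol : ∀ j, 0 < ∑ i, g i j) (hS : (Splus d).Nonempty) : 0 < vN g := by
  obtain ⟨x, hx⟩ := hS
  obtain ⟨j, -, -⟩ := exists_ne_zero_of_sum_ne_zero (hx.2.symm ▸ one_ne_zero : ∑ i, x i ≠ 0)
  have : Nonempty (Fin d) := ⟨j⟩
  obtain ⟨j₀, hj₀⟩ := Finite.exists_min fun j => ∑ i, g i j
  refine (hcol j₀).trans_le (le_csInf ⟨_, x, hx, rfl⟩ ?_)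
  rintro _ ⟨z, hz, rfl⟩
  rw [l1_mulVec_of_nonneg hg hz.1]
  calc ∑ i, g i j₀ = ∑ j, (∑ i, g i j₀) * z j := by rw [← mul_sum, hz.2, mul_one]
    _ ≤ ∑ j, (∑ i, g i j) * z j :=
        sum_le_sum fun j _ => mul_le_mul_of_nonneg_right (hj₀ j) (hz.1 j)

lemma mfun_nonneg {x : Fin d → ℝ} (hx : ∀ i, 0 ≤ x i) (y : Fin d → ℝ) : 0 ≤ mfun x y := by
  refine Real.sInf_nonneg ?_
  rintro _ ⟨i, hi, rfl⟩
  exact div_nonneg (hx i) hi.le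

lemma mfun_mul_le {x y : Fin d → ℝ} (hx : ∀ i, 0 ≤ x i) (hy : ∀ i, 0 ≤ y i) (i : Fin d) :
    mfun x y * y i ≤ x i := by
  rcases (hy i).eq_or_lt with hyi | hyi
  · rw [← hyi, mul_zero]
    exact hx i
  · rw [← le_div_iff₀ hyi]
    refine csInf_le ⟨0, ?_⟩ ⟨i, hyi, rfl⟩
    rintro _ ⟨j, hj, rfl⟩
    exact div_nonneg (hx j) hj.le

lemma mfun_le_one {x y : Fin d → ℝ} (hx : x ∈ Splus d) (hy : y ∈ Splus d) : mfun x y ≤ 1 :=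
  calc mfun x y = ∑ i, mfun x y * y i := by rw [← mul_sum, hy.2, mul_one]
    _ ≤ ∑ i, x i := sum_le_sum fun i _ => mfun_mul_le hx.1 hy.1 i
    _ = 1 := hx.2

lemma mfun_mul_l1_mulVec_le {g : Matrix (Fin d) (Fin d) ℝ} (hg : ∀ i j, 0 ≤ g i j)
    {x y : Fin d → ℝ} (hx : ∀ i, 0 ≤ x i) (hy : ∀ i, 0 ≤ y i) :
    mfun x y * l1 (g *ᵥ y) ≤ l1 (g *ᵥ x) := by
  rw [l1_mulVec_of_nonneg hg hx, l1_mulVec_of_nonneg hg hy, mul_sum]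
  refine sum_le_sum fun j _ => ?_
  rw [mul_left_comm]
  exact mul_le_mul_of_nonneg_left (mfun_mul_le hx hy j) (sum_nonneg fun i _ => hg i j)

lemma mfun_mul_mfun_le_one {x y : Fin d → ℝ} (hx : x ∈ Splus d) (hy : y ∈ Splus d) :
    mfun x y * mfun y x ≤ 1 :=
  mul_le_one₀ (mfun_le_one hx hy) (mfun_nonneg hy.1 x) (mfun_le_one hy hx)

lemma mfun_mul_mfun_mul_l1_mulVec_le {g : Matrix (Fin d) (Fin d) ℝ} (hg : ∀ i j, 0 ≤ g i j)
    {x y : Fin d → ℝ} (hx : x ∈ Splus d) (hy : y ∈ Splus d) :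
    mfun x y * mfun y x * l1 (g *ᵥ y) ≤ l1 (g *ᵥ x) :=
  calc mfun x y * mfun y x * l1 (g *ᵥ y) ≤ mfun x y * l1 (g *ᵥ y) := by
        rw [mul_right_comm]
        exact mul_le_of_le_one_right (mul_nonneg (mfun_nonneg hx.1 y) (l1_nonneg _))
          (mfun_le_one hy hx)
    _ ≤ l1 (g *ᵥ x) := mfun_mul_l1_mulVec_le hg hx.1 hy.1

lemma dmet_nonneg {x y : Fin d → ℝ} (hx : x ∈ Splus d) (hy : y ∈ Splus d) : 0 ≤ dmet x y := by
  have := mfun_mul_mfun_le_one hx hy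
  have := mul_nonneg (mfun_nonneg hx.1 y) (mfun_nonneg hy.1 x)
  exact div_nonneg (by linarith) (by linarith)

lemma abs_log_sub_le_neg_log {a b s : ℝ} (ha : 0 ≤ a) (hb : 0 ≤ b) (hs : 0 < s) (hs₁ : s ≤ 1)
    (hab : s * a ≤ b) (hba : s * b ≤ a) : |log a - log b| ≤ -log s := by
  rcases ha.eq_or_lt with rfl | ha
  · obtain rfl : b = 0 := by nlinarith
    simpa using log_nonpos hs.le hs₁
  have hb : 0 < b := (mul_pos hs ha).trans_le hab
  have hab' := log_le_log (by positivity) hab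
  have hba' := log_le_log (by positivity) hba
  rw [log_mul hs.ne' ha.ne'] at hab'
  rw [log_mul hs.ne' hb.ne'] at hba'
  rw [abs_sub_le_iff]
  constructor <;> linarith

lemma neg_log_le_four_mul {s : ℝ} (hs : 1 / 3 ≤ s) (hs₁ : s ≤ 1) :
    -log s ≤ 4 * ((1 - s) / (1 + s)) := by
  have hs₀ : 0 < s := by linarith
  calc -log s ≤ s⁻¹ - 1 := by linarith [one_sub_inv_le_log_of_pos hs₀]
    _ ≤ 4 * ((1 - s) / (1 + s)) := by
        rw [inv_eq_one_div, div_sub_one hs₀.ne', mul_div_assoc', div_le_div_iff₀ hs₀ (by linarith)]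
        nlinarith [mul_nonneg (sub_nonneg.2 hs₁) (sub_nonneg.2 hs)]

lemma abs_log_sub_le_log_div {a b u v : ℝ} (hv : 0 < v) (hva : v ≤ a) (hau : a ≤ u)
    (hvb : v ≤ b) (hbu : b ≤ u) : |log a - log b| ≤ log (u / v) := by
  rw [log_div (hv.trans_le (hva.trans hau)).ne' hv.ne', abs_sub_le_iff]
  constructor <;>
  linarith [log_le_log hv hva, log_le_log (hv.trans_le hva) hau, log_le_log hv hvb,
    log_le_log (hv.trans_le hvb) hbu]

lemma abs_log_l1_mulVec_sub_le_four_mul_dmet {g : Matrix (Fin d) (Fin d) ℝ}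
    (hg : ∀ i j, 0 ≤ g i j) {x y : Fin d → ℝ} (hx : x ∈ Splus d) (hy : y ∈ Splus d)
    (h : dmet x y ≤ 1 / 2) :
    |log (l1 (g *ᵥ x)) - log (l1 (g *ᵥ y))| ≤ 4 * dmet x y := by
  have hs₀ := mul_nonneg (mfun_nonneg hx.1 y) (mfun_nonneg hy.1 x)
  have hs₁ := mfun_mul_mfun_le_one hx hy
  have hs : 1 / 3 ≤ mfun x y * mfun y x := by
    rw [dmet, div_le_iff₀ (by linarith)] at h
    linarith
  have hyx := mfun_mul_mfun_mul_l1_mulVec_le hg hy hx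
  rw [mul_comm (mfun y x)] at hyx
  exact (abs_log_sub_le_neg_log (l1_nonneg _) (l1_nonneg _) (by linarith) hs₁ hyx
    (mfun_mul_mfun_mul_l1_mulVec_le hg hx hy)).trans (neg_log_le_four_mul hs hs₁)

lemma abs_log_l1_mulVec_sub_le_log_opN_div_vN {g : Matrix (Fin d) (Fin d) ℝ}
    (hg : ∀ i j, 0 ≤ g i j) (hcol : ∀ j, 0 < ∑ i, g i j) {x y : Fin d → ℝ}
    (hx : x ∈ Splus d) (hy : y ∈ Splus d) :
    |log (l1 (g *ᵥ x)) - log (l1 (g *ᵥ y))| ≤ log (opN g / vN g) :=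
  abs_log_sub_le_log_div (vN_pos hg hcol ⟨x, hx⟩)
    (vN_le_l1_mulVec g hx) (l1_mulVec_le_opN g (l1_eq_one_of_mem_Splus hx))
    (vN_le_l1_mulVec g hy) (l1_mulVec_le_opN g (l1_eq_one_of_mem_Splus hy))

theorem stmt8_general {d : ℕ} (g : Matrix (Fin d) (Fin d) ℝ)
    (hg : Allowable g) (x y : Fin d → ℝ) (hx : x ∈ Splus d) (hy : y ∈ Splus d) :
    (dmet x y ≤ 1 / 2 →
      |Real.log (l1 (g.mulVec x)) - Real.log (l1 (g.mulVec y))| ≤ 4 * dmet x y) ∧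
    |Real.log (l1 (g.mulVec x)) - Real.log (l1 (g.mulVec y))| ≤
      2 * (2 + Real.log (opN g / vN g)) * dmet x y := by
  have hlocal := abs_log_l1_mulVec_sub_le_four_mul_dmet hg.1 hx hy
  have hglobal := abs_log_l1_mulVec_sub_le_log_opN_div_vN hg.1 hg.sum_pos hx hy
  have hL := (abs_nonneg _).trans hglobal
  have hD := dmet_nonneg hx hy
  refine ⟨hlocal, ?_⟩
  rcases le_or_gt (dmet x y) (1 / 2) with h | h
  · nlinarith [hlocal h]
  · nlinarith

/-- If `d(x,y) ≤ 1/2` then `|σ(g,x) − σ(g,y)| ≤ 4 d(x,y)`; in general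
`|σ(g,x) − σ(g,y)| ≤ 2(2 + log L(g)) d(x,y)`. -/
theorem stmt8 {d : ℕ} (hd : 2 ≤ d) (g : Matrix (Fin d) (Fin d) ℝ)
    (hg : Allowable g) (x y : Fin d → ℝ) (hx : x ∈ Splus d) (hy : y ∈ Splus d) :
    (dmet x y ≤ 1 / 2 →
      |Real.log (l1 (g.mulVec x)) - Real.log (l1 (g.mulVec y))| ≤ 4 * dmet x y) ∧
    |Real.log (l1 (g.mulVec x)) - Real.log (l1 (g.mulVec y))| ≤
      2 * (2 + Real.log (opN g / vN g)) * dmet x y :=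
  stmt8_general g hg x y hx hy
end

section
/- Let K ⊂ ℝ^d be a closed solid proper convex cone and g a d×d real matrix. Then g(K \ {0}) ⊂ K \ {0} if and only if gᵗ(int(K*)) ⊂ int(K*); and g(int(K)) ⊂ int(K) if and only if gᵗ(K* \ {0}) ⊂ K* \ {0}. -/
/-- A closed solid proper convex cone in `ℝ^d`. -/
def IsSolidCone {d : ℕ} (K : Set (Fin d → ℝ)) : Prop :=
  IsClosed K ∧ Convex ℝ K ∧ (∀ c : ℝ, 0 ≤ c → ∀ x ∈ K, c • x ∈ K) ∧
    (interior K).Nonempty ∧ K ∩ (-K) = {0}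

/-- The dual cone `K* = {y : ⟨y,x⟩ ≥ 0 ∀ x ∈ K}`. -/
def dualCone {d : ℕ} (K : Set (Fin d → ℝ)) : Set (Fin d → ℝ) :=
  {y | ∀ x ∈ K, 0 ≤ ∑ i, y i * x i}

/-!
Pair `ℝ^d` with itself by the dot product: `gᵗ` is then the adjoint of `g` and `dualCone K` is the
dual cone. For a closed convex cone `C` whose dual `D` has nonempty interior, `int D` consists of
the functionals that are strictly positive on `C \ {0}` (a nonzero functional is an open map; in
the other direction, `C ∩ sphere` is compact), and by the bipolar theorem and the density of
`int D` in `D`, a vector lies in `C \ {0}` as soon as every element of `int D` is strictly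
positive on it. Together these give `T(C \ {0}) ⊆ C \ {0} ↔ T*(int D) ⊆ int D`. Apply this to
`C = K`, whose dual has nonempty interior because `K` is salient, and, with the two sides of the
pairing exchanged, to `C = K*`, whose dual is `K`.
-/

open Set Topology Matrix

instance {ι : Type*} [Fintype ι] :
    (dotProductBilin ℝ ℝ : (ι → ℝ) →ₗ[ℝ] (ι → ℝ) →ₗ[ℝ] ℝ).IsContPerfPair where
  continuous_uncurry := continuous_fst.dotProduct continuous_snd
  bijective_left := by
    classical
    convert ((dotProductEquiv ℝ ι).trans LinearMap.toContinuousLinearMap).bijective using 1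
    ext x y
    simp
  bijective_right := by
    classical
    convert ((dotProductEquiv ℝ ι).trans LinearMap.toContinuousLinearMap).bijective using 1
    ext x y
    exact dotProduct_comm y x

namespace ProperCone

variable {E F : Type*} [NormedAddCommGroup E] [NormedSpace ℝ E]
  [NormedAddCommGroup F] [NormedSpace ℝ F] {p : E →ₗ[ℝ] F →ₗ[ℝ] ℝ} [p.IsContPerfPair]

lemma pos_of_mem_interior_dual [FiniteDimensional ℝ F] {s : Set E} {x : E} {y : F}
    (hx : x ∈ s) (hx₀ : x ≠ 0) (hy : y ∈ interior (dual p s : Set F)) : 0 < p x y := by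
  have hpx : p x ≠ 0 := fun h ↦ hx₀ <| p.toContPerfPair.injective <| by ext; simp [h]
  have hopen : IsOpenMap (p x) :=
    (p x).isOpenMap_of_finiteDimensional ((p x).surjective_or_eq_zero.resolve_right hpx)
  have : p x y ∈ interior (Ici 0) :=
    interior_mono (image_subset_iff.2 fun _z hz ↦ mem_dual.1 hz hx)
      (hopen.image_interior_subset _ ⟨y, hy, rfl⟩)
  simpa using this

lemma mem_interior_dual_of_pos [FiniteDimensional ℝ E] {C : ProperCone ℝ E} {y : F}
    (hy : ∀ x ∈ C, x ≠ 0 → 0 < p x y) : y ∈ interior (dual p C : Set F) := by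
  set S := (C : Set E) ∩ Metric.sphere 0 1
  have hS : IsCompact S := (isCompact_sphere 0 1).inter_left C.isClosed
  have hcont : Continuous fun z : F × E ↦ p z.2 z.1 :=
    p.continuous_uncurry_of_isContPerfPair.comp continuous_swap
  have hev : ∀ᶠ z in 𝓝 y, ∀ u ∈ S, 0 < p u z :=
    hS.eventually_forall_of_forall_eventually fun u hu ↦
      continuousAt_const.eventually_lt hcont.continuousAt
        (hy u hu.1 (ne_zero_of_mem_unit_sphere ⟨u, hu.2⟩))
  refine mem_interior_iff_mem_nhds.2 (hev.mono fun z hz x hx ↦ ?_)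
  rcases eq_or_ne x 0 with rfl | hx₀
  · simp
  have hu : ‖x‖⁻¹ • x ∈ S := ⟨C.smul_mem hx (by positivity), by simp [norm_smul, hx₀]⟩
  have hxu : x = ‖x‖ • ‖x‖⁻¹ • x := by simp [smul_smul, hx₀]
  rw [hxu, map_smul, LinearMap.smul_apply, smul_eq_mul]
  exact mul_nonneg (norm_nonneg x) (hz _ hu).le

lemma mem_interior_dual_iff [FiniteDimensional ℝ E] [FiniteDimensional ℝ F] {C : ProperCone ℝ E}
    {y : F} : y ∈ interior (dual p C : Set F) ↔ ∀ x ∈ C, x ≠ 0 → 0 < p x y :=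
  ⟨fun hy _x hx hx₀ ↦ pos_of_mem_interior_dual hx hx₀ hy, mem_interior_dual_of_pos⟩

lemma mem_diff_zero_of_pos_on_interior_dual (C : ProperCone ℝ E)
    (hD : (interior (dual p C : Set F)).Nonempty) {x : E}
    (hx : ∀ y ∈ interior (dual p C : Set F), 0 < p x y) : x ∈ (C : Set E) \ {0} := by
  obtain ⟨y₀, hy₀⟩ := hD
  refine ⟨?_, fun hx₀ ↦ by simpa [show x = 0 from hx₀] using hx y₀ hy₀⟩
  have hdense : (dual p C : Set F) ⊆ closure (interior (dual p C)) := by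
    rw [(dual p C).convex.closure_interior_eq_closure_of_nonempty_interior ⟨y₀, hy₀⟩]
    exact subset_closure
  rw [← C.dual_flip_dual p]
  intro y hy
  exact closure_minimal (fun z hz ↦ (hx z hz).le)
    (isClosed_le continuous_const p.continuous_of_isContPerfPair) (hdense hy)

lemma interior_dual_nonempty [FiniteDimensional ℝ F] {C : ProperCone ℝ E}
    (hC : ∀ x ∈ C, -x ∈ C → x = 0) : (interior (dual p C : Set F)).Nonempty := by
  set D := dual p (C : Set E)
  rw [D.convex.interior_nonempty_iff_affineSpan_eq_top,
    AffineSubspace.affineSpan_eq_top_iff_vectorSpan_eq_top_of_nonempty ℝ _ _ D.nonempty,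
    vectorSpan_eq_span_vsub_set_right ℝ (show (0 : F) ∈ (D : Set F) from D.zero_mem)]
  simp only [vsub_eq_sub, sub_zero, image_id']
  by_contra hspan
  obtain ⟨f, hf₀, hf⟩ := (Submodule.span ℝ (D : Set F)).exists_le_ker_of_lt_top
    (lt_top_iff_ne_top.2 hspan)
  obtain ⟨x, hx⟩ := p.toContPerfPair.surjective (LinearMap.toContinuousLinearMap f)
  have hxf : ∀ y, p x y = f y := fun y ↦ congr($hx y)
  have hxD : ∀ y ∈ D, p x y = 0 := fun y hy ↦ (hxf y).trans (hf (Submodule.subset_span hy))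
  have mem_C : ∀ z : E, (∀ y ∈ D, p z y = 0) → z ∈ C := fun z hz ↦ by
    rw [← SetLike.mem_coe, ← C.dual_flip_dual p]
    intro y hy
    simp [hz y hy]
  have hx₀ : x = 0 := hC x (mem_C x hxD) (mem_C (-x) fun y hy ↦ by simp [hxD y hy])
  exact hf₀ <| LinearMap.ext fun y ↦ by rw [← hxf, hx₀]; simp

lemma mapsTo_diff_zero_iff_mapsTo_interior_dual [FiniteDimensional ℝ E] [FiniteDimensional ℝ F]
    (C : ProperCone ℝ E) (hD : (interior (dual p C : Set F)).Nonempty) {T : E → E} {S : F → F}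
    (hTS : ∀ x y, p (T x) y = p x (S y)) :
    MapsTo T ((C : Set E) \ {0}) ((C : Set E) \ {0}) ↔
      MapsTo S (interior (dual p C)) (interior (dual p C)) := by
  constructor
  · intro hT y hy
    rw [mem_interior_dual_iff] at hy ⊢
    intro x hx hx₀
    rw [← hTS]
    exact hy _ (hT ⟨hx, hx₀⟩).1 (hT ⟨hx, hx₀⟩).2
  · rintro hS x ⟨hx, hx₀⟩
    exact mem_diff_zero_of_pos_on_interior_dual C hD fun y hy ↦ by
      rw [hTS]; exact pos_of_mem_interior_dual hx hx₀ (hS hy)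

end ProperCone

namespace IsSolidCone

variable {d : ℕ} {K : Set (Fin d → ℝ)}

lemma eq_zero_of_mem_of_neg_mem (hK : IsSolidCone K) {x : Fin d → ℝ} (hx : x ∈ K)
    (hnx : -x ∈ K) : x = 0 := by
  have : x ∈ K ∩ -K := ⟨hx, hnx⟩
  rwa [hK.2.2.2.2] at this

def toProperCone (hK : IsSolidCone K) : ProperCone ℝ (Fin d → ℝ) where
  carrier := K
  add_mem' {x y} hx hy := by
    have hmid := hK.2.1 hx hy (by norm_num : (0 : ℝ) ≤ 1 / 2) (by norm_num : (0 : ℝ) ≤ 1 / 2)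
      (by norm_num)
    convert hK.2.2.1 2 zero_le_two _ hmid using 1
    module
  zero_mem' := by
    have : (0 : Fin d → ℝ) ∈ K ∩ -K := by rw [hK.2.2.2.2]; rfl
    exact this.1
  smul_mem' c x hx := hK.2.2.1 c c.2 x hx
  isClosed' := hK.1

end IsSolidCone

lemma dualCone_eq_dual {d : ℕ} (K : Set (Fin d → ℝ)) :
    dualCone K = ProperCone.dual (dotProductBilin ℝ ℝ).flip K := rfl

/-- `g(K∖{0}) ⊆ K∖{0}` iff `gᵗ(int K*) ⊆ int K*`; and `g(int K) ⊆ int K` iff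
`gᵗ(K*∖{0}) ⊆ K*∖{0}`. -/
theorem stmt16 {d : ℕ} (K : Set (Fin d → ℝ)) (hK : IsSolidCone K)
    (g : Matrix (Fin d) (Fin d) ℝ) :
    ((g.mulVec '' (K \ {0}) ⊆ K \ {0}) ↔
      (g.transpose.mulVec '' interior (dualCone K) ⊆ interior (dualCone K))) ∧
    ((g.mulVec '' interior K ⊆ interior K) ↔
      (g.transpose.mulVec '' (dualCone K \ {0}) ⊆ dualCone K \ {0})) := by
  set p : (Fin d → ℝ) →ₗ[ℝ] (Fin d → ℝ) →ₗ[ℝ] ℝ := (dotProductBilin ℝ ℝ).flip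
  set C := hK.toProperCone
  have hadj : ∀ x y, p (g *ᵥ x) y = p x (gᵀ *ᵥ y) := fun x y ↦ by
    simp [p, dotProduct_mulVec, mulVec_transpose]
  have hintD : (interior (ProperCone.dual p C : Set (Fin d → ℝ))).Nonempty :=
    ProperCone.interior_dual_nonempty fun x hx hnx ↦ hK.eq_zero_of_mem_of_neg_mem hx hnx
  have hprimal := ProperCone.mapsTo_diff_zero_iff_mapsTo_interior_dual C hintD hadj
  have hdual := ProperCone.mapsTo_diff_zero_iff_mapsTo_interior_dual (p := p.flip)
    (ProperCone.dual p C) (by rw [C.dual_flip_dual p]; exact hK.2.2.2.1)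
    (T := gᵀ.mulVec) (S := g.mulVec) fun y x ↦ (hadj x y).symm
  rw [C.dual_flip_dual p] at hdual
  simp only [← mapsTo_iff_image_subset, dualCone_eq_dual]
  exact ⟨hprimal, hdual.symm⟩
end

section
/- Let g ∈ G be a nonnegative allowable d×d matrix such that ⟨x, g·y⟩ ≥ δ for all x, y ∈ S⁺ and some δ ∈ (0,1] (where g·y = gy/‖gy‖). Then for all x, y ∈ S⁺, d(g·x, g·y) ≤ (1−δ²)/(1+δ²) < 1, and ‖g‖ ≤ v(gᵗ)/δ. -/
/-- The projective action `g · x = gx / ‖gx‖₁`. -/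
noncomputable def act {d : ℕ} (g : Matrix (Fin d) (Fin d) ℝ) (x : Fin d → ℝ) :
    Fin d → ℝ := (l1 (g.mulVec x))⁻¹ • g.mulVec x

lemma single_mem_Splus {d : ℕ} (i : Fin d) : Pi.single i (1 : ℝ) ∈ Splus d := by
  constructor
  · intro j
    rcases eq_or_ne j i with rfl | hne
    · simp
    · simp [Pi.single_apply, hne]
  · simp

lemma sum_single_mul {d : ℕ} (i : Fin d) (w : Fin d → ℝ) :
    ∑ j, (Pi.single i 1 : Fin d → ℝ) j * w j = w i := by
  simp [Pi.single_apply]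

/-- If `⟨x, g·y⟩ ≥ δ` for all `x, y ∈ S⁺`, then `g` contracts the projective metric by
the factor `(1−δ²)/(1+δ²) < 1`, and `‖g‖ ≤ v(gᵗ)/δ` (with `‖h‖ = max_j ∑_i h_{ij}` and
`v(h) = min_j ∑_i h_{ij}`). -/
theorem stmt19 {d : ℕ} (hd : 2 ≤ d) (g : Matrix (Fin d) (Fin d) ℝ)
    (hg : Allowable g) (δ : ℝ) (hδ : δ ∈ Set.Ioc (0 : ℝ) 1)
    (h : ∀ x ∈ Splus d, ∀ y ∈ Splus d, δ ≤ ∑ i, x i * act g y i) :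
    (∀ x ∈ Splus d, ∀ y ∈ Splus d,
        dmet (act g x) (act g y) ≤ (1 - δ ^ 2) / (1 + δ ^ 2)) ∧
      (1 - δ ^ 2) / (1 + δ ^ 2) < 1 ∧
      sSup {c : ℝ | ∃ j : Fin d, c = ∑ i, g i j} ≤
        sInf {c : ℝ | ∃ j : Fin d, c = ∑ i, g.transpose i j} / δ := by
  obtain ⟨hδ0, hδ1⟩ := hδ
  have i0 : Fin d := ⟨0, by omega⟩
  -- every coordinate of `act g y` is at least δ
  have key : ∀ y ∈ Splus d, ∀ i, δ ≤ act g y i := by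
    intro y hy i
    have := h (Pi.single i 1) (single_mem_Splus i) y hy
    rwa [sum_single_mul] at this
  -- positivity of the normalizing constant
  have hl1pos : ∀ y ∈ Splus d, 0 < l1 (g.mulVec y) := by
    intro y hy
    by_contra hle
    push_neg at hle
    have h0 : l1 (g.mulVec y) = 0 :=
      le_antisymm hle (Finset.sum_nonneg fun i _ => abs_nonneg _)
    have := key y hy i0
    rw [act, h0] at this
    simp at this
    linarith
  -- `act g y` lies in S⁺
  have hact : ∀ y ∈ Splus d, act g y ∈ Splus d := by
    intro y hy
    have hpos := hl1pos y hy
    have hnn : ∀ i, 0 ≤ g.mulVec y i := by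
      intro i
      simp only [Matrix.mulVec, dotProduct]
      exact Finset.sum_nonneg fun j _ => mul_nonneg (hg.1 i j) (hy.1 j)
    constructor
    · intro i
      exact mul_nonneg (inv_nonneg.2 hpos.le) (hnn i)
    · have hsum : ∑ i, g.mulVec y i = l1 (g.mulVec y) := by
        unfold l1
        exact Finset.sum_congr rfl fun i _ => (abs_of_nonneg (hnn i)).symm
      simp only [act, Pi.smul_apply, smul_eq_mul, ← Finset.mul_sum]
      rw [hsum, inv_mul_cancel₀ hpos.ne']
  refine ⟨?_, ?_, ?_⟩
  · intro x hx y hy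
    set u := act g x with hu
    set v := act g y with hv
    have hus := hact x hx
    have hvs := hact y hy
    have hcoord : ∀ (a b : Fin d → ℝ), a ∈ Splus d → (∀ i, δ ≤ a i) →
        b ∈ Splus d → (∀ i, δ ≤ b i) → δ ≤ mfun a b := by
      intro a b has hak hbs hbk
      have hne : {c : ℝ | ∃ i : Fin d, 0 < b i ∧ c = a i / b i}.Nonempty :=
        ⟨a i0 / b i0, i0, lt_of_lt_of_le hδ0 (hbk i0), rfl⟩
      apply le_csInf hne
      rintro c ⟨i, hbi, rfl⟩
      rw [le_div_iff₀ hbi]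
      have hb1 : b i ≤ 1 := by
        have := Finset.single_le_sum (f := b) (fun j _ => hbs.1 j) (Finset.mem_univ i)
        rw [hbs.2] at this
        exact this
      calc δ * b i ≤ δ * 1 := by nlinarith
        _ ≤ a i := by linarith [hak i]
    have hm1 : δ ≤ mfun u v := hcoord u v hus (key x hx) hvs (key y hy)
    have hm2 : δ ≤ mfun v u := hcoord v u hvs (key y hy) hus (key x hx)
    have hs : δ ^ 2 ≤ mfun u v * mfun v u := by nlinarith
    have hsp : 0 < 1 + mfun u v * mfun v u := by nlinarith
    rw [dmet, div_le_div_iff₀ hsp (by nlinarith)]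
    nlinarith
  · rw [div_lt_one (by nlinarith)]
    nlinarith
  · -- column sums bounded by row sums over δ
    have col : ∀ j k : Fin d, δ * (∑ i, g i j) ≤ g k j := by
      intro j k
      have hk := key (Pi.single j 1) (single_mem_Splus j) k
      have hmv : g.mulVec (Pi.single j (1 : ℝ)) = fun i => g i j := by
        funext i
        simp [Matrix.mulVec_single]
      have hC : l1 (g.mulVec (Pi.single j (1 : ℝ))) = ∑ i, g i j := by
        rw [hmv]; unfold l1
        exact Finset.sum_congr rfl fun i _ => abs_of_nonneg (hg.1 i j)
      have hCpos : 0 < ∑ i, g i j := by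
        have := hl1pos _ (single_mem_Splus j)
        rwa [hC] at this
      rw [act, hC, hmv] at hk
      simp only [Pi.smul_apply, smul_eq_mul] at hk
      rw [inv_mul_eq_div, le_div_iff₀ hCpos] at hk
      linarith [hk]
    have hne1 : {c : ℝ | ∃ j : Fin d, c = ∑ i, g i j}.Nonempty := ⟨∑ i, g i i0, i0, rfl⟩
    apply csSup_le hne1
    rintro c ⟨j, rfl⟩
    rw [le_div_iff₀ hδ0]
    have hne2 : {c : ℝ | ∃ j : Fin d, c = ∑ i, g.transpose i j}.Nonempty :=
      ⟨∑ i, g.transpose i i0, i0, rfl⟩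
    apply le_csInf hne2
    rintro b ⟨k, rfl⟩
    have h1 : g k j ≤ ∑ i, g.transpose i k := by
      have : ∑ i, g.transpose i k = ∑ i, g k i := by
        simp [Matrix.transpose_apply]
      rw [this]
      exact Finset.single_le_sum (f := fun i => g k i) (fun i _ => hg.1 k i)
        (Finset.mem_univ j)
    calc (∑ i, g i j) * δ = δ * ∑ i, g i j := mul_comm _ _
      _ ≤ g k j := col j k
      _ ≤ ∑ i, g.transpose i k := h1
end
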